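/- Every n-dimensional evolution algebra over a field K whose annihilator has dimension n − 1 is isotopic to the evolution algebra E_1 with natural basis {e_1,…,e_n} and products e_1e_1 = e_1 and e_ie_j = 0 otherwise. -/

import Mathlib

open scoped BigOperators

noncomputable section

/-- The product in the `n`-dimensional evolution algebra over `K` (on the model space
`Fin n → K`, whose standard basis is the natural basis) with structure constants `t`,
so that `eᵢ * eᵢ = ∑ⱼ t i j • eⱼ` and `eᵢ * eⱼ = 0` for `i ≠ j`. -/
def evolMul {K : Type*} [Field K] {n : ℕ} (t : Fin n → Fin n → K)
    (x y : Fin n → K) : Fin n → K :=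
  fun k => ∑ i, x i * y i * t i k

lemma evolMul_add_left {K : Type*} [Field K] {n : ℕ} (t : Fin n → Fin n → K)
    (a b v : Fin n → K) : evolMul t (a + b) v = evolMul t a v + evolMul t b v := by
  funext k
  simp [evolMul, add_mul, Finset.sum_add_distrib]

lemma evolMul_add_right {K : Type*} [Field K] {n : ℕ} (t : Fin n → Fin n → K)
    (v a b : Fin n → K) : evolMul t v (a + b) = evolMul t v a + evolMul t v b := by
  funext k
  simp [evolMul, mul_add, add_mul, Finset.sum_add_distrib]

lemma evolMul_smul_left {K : Type*} [Field K] {n : ℕ} (t : Fin n → Fin n → K)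
    (c : K) (a v : Fin n → K) : evolMul t (c • a) v = c • evolMul t a v := by
  funext k
  simp [evolMul, Finset.mul_sum, mul_assoc]

lemma evolMul_smul_right {K : Type*} [Field K] {n : ℕ} (t : Fin n → Fin n → K)
    (c : K) (v a : Fin n → K) : evolMul t v (c • a) = c • evolMul t v a := by
  funext k
  simp [evolMul, Finset.mul_sum]
  ring_nf
  apply Finset.sum_congr rfl
  intro i _
  ring

/-- The annihilator of the evolution algebra with structure constants `t`. -/
def evolAnn {K : Type*} [Field K] {n : ℕ} (t : Fin n → Fin n → K) :
    Submodule K (Fin n → K) where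
  carrier := {u | ∀ v, evolMul t u v = 0 ∧ evolMul t v u = 0}
  zero_mem' := by
    intro v
    constructor <;> · funext k; simp [evolMul]
  add_mem' := by
    intro a b ha hb v
    exact ⟨by rw [evolMul_add_left, (ha v).1, (hb v).1, add_zero],
           by rw [evolMul_add_right, (ha v).2, (hb v).2, add_zero]⟩
  smul_mem' := by
    intro c a ha v
    exact ⟨by rw [evolMul_smul_left, (ha v).1, smul_zero],
           by rw [evolMul_smul_right, (ha v).2, smul_zero]⟩

/-- The derived algebra (span of all products). -/
def evolDerived {K : Type*} [Field K] {n : ℕ} (t : Fin n → Fin n → K) :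
    Submodule K (Fin n → K) :=
  Submodule.span K {w | ∃ u v, evolMul t u v = w}

/-- Two evolution algebras (given by structure constants) are isomorphic. -/
def EvolIsom {K : Type*} [Field K] {n : ℕ} (t t' : Fin n → Fin n → K) : Prop :=
  ∃ f : (Fin n → K) ≃ₗ[K] (Fin n → K),
    ∀ u v, evolMul t' (f u) (f v) = f (evolMul t u v)

/-- Two evolution algebras (given by structure constants) are isotopic. -/
def EvolIsotopic {K : Type*} [Field K] {n : ℕ} (t t' : Fin n → Fin n → K) : Prop :=
  ∃ f g h : (Fin n → K) ≃ₗ[K] (Fin n → K),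
    ∀ u v, evolMul t' (f u) (g v) = h (evolMul t u v)

/-- Two evolution algebras (given by structure constants) are strongly isotopic. -/
def EvolStrongIsotopic {K : Type*} [Field K] {n : ℕ} (t t' : Fin n → Fin n → K) : Prop :=
  ∃ f h : (Fin n → K) ≃ₗ[K] (Fin n → K),
    ∀ u v, evolMul t' (f u) (f v) = h (evolMul t u v)

/-!
The annihilator consists of the vectors vanishing at every index `j` with `t j ≠ 0`, so it has
codimension one exactly when a single row `t i` of the structure matrix is nonzero. Then
`u * v = (u i * v i) • t i`, and two such algebras are isotopic: permute coordinates to move the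
distinguished index, and send one nonzero row to the other by a linear automorphism.
-/

theorem exists_linearEquiv_apply_eq_of_ne_zero {K V : Type*} [DivisionRing K] [AddCommGroup V]
    [Module K V] {v w : V} (hv : v ≠ 0) (hw : w ≠ 0) : ∃ g : V ≃ₗ[K] V, g v = w := by
  obtain ⟨g, hg⟩ := Submodule.exists_linearEquiv_restrict_eq
    ((LinearEquiv.toSpanNonzeroSingleton K V v hv).symm ≪≫ₗ
      LinearEquiv.toSpanNonzeroSingleton K V w hw)
  have := hg ⟨v, Submodule.mem_span_singleton_self v⟩
  rw [LinearEquiv.trans_apply, ← LinearEquiv.coord, LinearEquiv.coord_self] at this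
  exact ⟨g, by simpa using this.symm⟩

section EvolutionAlgebra

variable {K : Type*} [Field K] {n : ℕ}

theorem evolMul_single_right (t : Fin n → Fin n → K) (u : Fin n → K) (j : Fin n) (c : K) :
    evolMul t u (Pi.single j c) = (u j * c) • t j := by
  funext k
  simp [evolMul, Pi.single_apply]

theorem evolMul_eq_smul_of_forall_ne_eq_zero {t : Fin n → Fin n → K} {i : Fin n}
    (hrows : ∀ j ≠ i, t j = 0) (u v : Fin n → K) :
    evolMul t u v = (u i * v i) • t i := by
  funext k
  simp only [evolMul, Pi.smul_apply, smul_eq_mul]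
  rw [Finset.sum_eq_single i (fun j _ hj => by simp [hrows j hj]) (by simp)]

theorem evolMul_eq_zero_of_forall {t : Fin n → Fin n → K} {u v : Fin n → K}
    (h : ∀ j, u j = 0 ∨ v j = 0 ∨ t j = 0) : evolMul t u v = 0 := by
  funext k
  refine Finset.sum_eq_zero fun j _ => ?_
  rcases h j with h | h | h <;> simp [h]

theorem mem_evolAnn_iff {t : Fin n → Fin n → K} {u : Fin n → K} :
    u ∈ evolAnn t ↔ ∀ j, t j ≠ 0 → u j = 0 := by
  refine ⟨fun hu j hj => ?_, fun hu v => ?_⟩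
  · have := (hu (Pi.single j 1)).1
    rw [evolMul_single_right, smul_eq_zero] at this
    simpa [hj] using this
  · refine ⟨evolMul_eq_zero_of_forall fun j => ?_, evolMul_eq_zero_of_forall fun j => ?_⟩
    · by_cases hj : t j = 0 <;> simp [hj, hu j]
    · by_cases hj : t j = 0 <;> simp [hj, hu j]

theorem finrank_evolAnn_add_card (t : Fin n → Fin n → K) :
    Module.finrank K (evolAnn t) + Nat.card {j // t j ≠ 0} = n := by
  classical
  let π := LinearMap.funLeft K K (Subtype.val : {j // t j ≠ 0} → Fin n)
  have hker : LinearMap.ker π = evolAnn t := by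
    ext u
    simp [π, mem_evolAnn_iff, funext_iff]
  have hrange : LinearMap.range π = ⊤ := LinearMap.range_eq_top.mpr
    (LinearMap.funLeft_surjective_of_injective K K _ Subtype.val_injective)
  have := LinearMap.finrank_range_add_finrank_ker π
  rw [hrange, hker, finrank_top, Module.finrank_pi, Module.finrank_pi,
    Fintype.card_fin, ← Nat.card_eq_fintype_card] at this
  omega

theorem exists_forall_ne_eq_zero_of_finrank_evolAnn {t : Fin n → Fin n → K} (hn : 1 ≤ n)
    (hann : Module.finrank K (evolAnn t) = n - 1) : ∃ i, t i ≠ 0 ∧ ∀ j ≠ i, t j = 0 := by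
  have hcard : Nat.card {j // t j ≠ 0} = 1 := by
    have := finrank_evolAnn_add_card t
    omega
  obtain ⟨⟨i, hi⟩, hunique⟩ := Nat.card_eq_one_iff_exists.mp hcard
  exact ⟨i, hi, fun j hj => by_contra fun htj => hj congr($(hunique ⟨j, htj⟩).val)⟩

theorem evolIsotopic_of_forall_ne_eq_zero {t t' : Fin n → Fin n → K} {i i' : Fin n}
    (hi : t i ≠ 0) (hrows : ∀ j ≠ i, t j = 0) (hi' : t' i' ≠ 0) (hrows' : ∀ j ≠ i', t' j = 0) :
    EvolIsotopic t t' := by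
  obtain ⟨h, hh⟩ := exists_linearEquiv_apply_eq_of_ne_zero (K := K) hi hi'
  let f := LinearEquiv.funCongrLeft K K (Equiv.swap i' i)
  have hf (u : Fin n → K) : f u i' = u i := by simp [f]
  refine ⟨f, f, h, fun u v => ?_⟩
  rw [evolMul_eq_smul_of_forall_ne_eq_zero hrows', evolMul_eq_smul_of_forall_ne_eq_zero hrows,
    map_smul, hh, hf, hf]

end EvolutionAlgebra

theorem isotopic_E1_of_annihilator_codim_one
    {K : Type*} [Field K] {n : ℕ} (hn : 1 ≤ n) (t : Fin n → Fin n → K)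
    (hann : Module.finrank K (evolAnn t) = n - 1) :
    EvolIsotopic t (fun i j : Fin n => if (i : ℕ) = 0 ∧ (j : ℕ) = 0 then (1 : K) else 0) := by
  obtain ⟨i, hi, hrows⟩ := exists_forall_ne_eq_zero_of_finrank_evolAnn hn hann
  refine evolIsotopic_of_forall_ne_eq_zero (i' := ⟨0, hn⟩) hi hrows ?_ ?_
  · intro h
    simpa using congr_fun h ⟨0, hn⟩
  · intro j hj
    funext k
    simp [Fin.ext_iff.not.mp hj]
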